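/- Let (K, ∂) be a differential field of characteristic 0 with algebraically closed field of constants C. If every homogeneous linear differential equation ∂Y = AY over K (A ∈ Mₙ(K), any n) has a fundamental matrix of solutions Z ∈ GLₙ(K), then K is algebraically closed. -/

import Mathlib

open scoped Matrix

/-!
Let `q` be a monic irreducible factor of `p` and `L = K[X]/(q)`, with the unique extension of `∂`.
Every constant `z` of `L` lies in `K`: applying `∂` to `m(z) = 0`, where `m` is its minimal
polynomial, gives `m^∂(z) = 0` for the polynomial `m^∂` of derived coefficients, which has smaller
degree; so `m` has constant coefficients, hence a root in `C`, hence degree one. On the other hand,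
in the coordinates of a `K`-basis of `L`, `∂` acts as `c ↦ ∂c + Ac`, so the columns of a fundamental
matrix of `∂Y = -AY` are coordinate vectors of constants of `L`, and they span `L` over `K`.
Thus `L = K`, and the root of `q` in `L` is a root of `p` in `K`.
-/

open Polynomial Differential

def Derivation.ofLeibniz {K : Type*} [Field K] (δ : K → K)
    (hadd : ∀ a b : K, δ (a + b) = δ a + δ b)
    (hmul : ∀ a b : K, δ (a * b) = a * δ b + b * δ a) : Derivation ℤ K K :=
  Derivation.mk' (AddMonoidHom.mk' δ hadd).toIntLinearMap hmul

namespace Differential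

variable {K : Type*} [Field K] [Differential K]

theorem degree_mapCoeffs_lt {p : K[X]} (hp : p.Monic) : (mapCoeffs p).degree < p.degree := by
  rw [degree_eq_natDegree hp.ne_zero, degree_lt_iff_coeff_zero]
  intro m hm
  rcases hm.eq_or_lt with rfl | hlt
  · simp [hp.coeff_natDegree]
  · simp [coeff_eq_zero_of_natDegree_lt hlt]

theorem containConstants_of_forall_root
    (hC : ∀ p : K[X], 0 < p.degree → (∀ i, (p.coeff i)′ = 0) → ∃ x : K, p.IsRoot x)
    {L : Type*} [Field L] [Algebra K L] [Algebra.IsIntegral K L] [Differential L]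
    [DifferentialAlgebra K L] : ContainConstants K L where
  mem_range_of_deriv_eq_zero {z} hz := by
    have hint : IsIntegral K z := Algebra.IsIntegral.isIntegral z
    have hm : aeval z (mapCoeffs (minpoly K z)) = 0 := by
      simpa [hz] using (deriv_aeval_eq z (minpoly K z)).symm
    have hm0 : mapCoeffs (minpoly K z) = 0 := by
      by_contra hne
      exact (minpoly.degree_le_of_ne_zero K z hne hm).not_gt
        (degree_mapCoeffs_lt (minpoly.monic hint))
    obtain ⟨x, hx⟩ := hC (minpoly K z) (minpoly.degree_pos hint) fun i => by
      rw [← coeff_mapCoeffs, hm0, coeff_zero]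
    rw [← minpoly.natDegree_eq_one_iff, ← degree_eq_iff_natDegree_eq_of_pos one_pos]
    exact degree_eq_one_of_irreducible_of_root (minpoly.irreducible hint) hx

variable {L : Type*} [CommRing L] [Algebra K L] [Differential L] [DifferentialAlgebra K L]

theorem deriv_smul (a : K) (x : L) : (a • x)′ = a′ • x + a • x′ := by
  rw [Algebra.smul_def, Derivation.leibniz, deriv_algebraMap, smul_eq_mul, smul_eq_mul,
    Algebra.smul_def, Algebra.smul_def]
  ring

noncomputable def derivMatrix {ι : Type*} [Fintype ι] (B : Module.Basis ι K L) :
    Matrix ι ι K :=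
  fun i j => B.repr (B j)′ i

theorem deriv_basis_equivFun_symm {ι : Type*} [Fintype ι] (B : Module.Basis ι K L)
    (c : ι → K) :
    (B.equivFun.symm c)′ = B.equivFun.symm (⇑Differential.deriv ∘ c + derivMatrix B *ᵥ c) := by
  classical
  apply B.equivFun.injective
  ext i
  simp [Module.Basis.equivFun_symm_apply, deriv_smul, Finsupp.single_apply, derivMatrix,
    Matrix.mulVec, dotProduct, mul_comm, Finset.sum_add_distrib]

theorem deriv_basis_equivFun_symm_col {ι : Type*} [Fintype ι] (B : Module.Basis ι K L)
    {Z : Matrix ι ι K} (hZ : Z.map (⇑Differential.deriv) = -derivMatrix B * Z) (k : ι) :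
    (B.equivFun.symm (Z.col k))′ = 0 := by
  rw [deriv_basis_equivFun_symm]
  convert B.equivFun.symm.map_zero
  ext j
  simpa [Matrix.mulVec, dotProduct, Matrix.mul_apply, eq_neg_iff_add_eq_zero]
    using congrFun (congrFun hZ j) k

theorem mem_bot_of_forall_fundamentalMatrix
    (hPV : ∀ (n : ℕ) (A : Matrix (Fin n) (Fin n) K),
      ∃ Z Zinv : Matrix (Fin n) (Fin n) K, Z.map (⇑Differential.deriv) = A * Z ∧ Z * Zinv = 1)
    [ContainConstants K L] [Module.Finite K L] (x : L) : x ∈ (⊥ : Subalgebra K L) := by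
  let B := Module.finBasis K L
  obtain ⟨Z, Zinv, hZ, hZZinv⟩ := hPV _ (-derivMatrix B)
  set w := Zinv *ᵥ B.equivFun x
  have hx : x = ∑ k, w k • B.equivFun.symm (Z.col k) := by
    rw [← B.equivFun.symm_apply_apply x]
    simp only [← map_smul, ← map_sum]
    congr 1
    calc B.equivFun x = Z *ᵥ w := by simp [w, Matrix.mulVec_mulVec, hZZinv]
      _ = ∑ k, w k • Z.col k := by simp [Matrix.mulVec_eq_sum, Matrix.col]
  rw [hx]
  refine Subalgebra.sum_mem _ fun k _ => Subalgebra.smul_mem _ ?_ _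
  exact Algebra.mem_bot.mpr (mem_range_of_deriv_eq_zero K (deriv_basis_equivFun_symm_col B hZ k))

end Differential

/-- If `K` has algebraically closed field of constants and every linear differential system over
`K` has a fundamental matrix of solutions in `K`, then `K` is algebraically closed. -/
theorem algClosed_of_PV_closed {K : Type*} [Field K] [CharZero K] (δ : K → K)
    (hadd : ∀ a b : K, δ (a + b) = δ a + δ b)
    (hmul : ∀ a b : K, δ (a * b) = a * δ b + b * δ a)
    (hCalgclosed : ∀ p : Polynomial K, 0 < p.degree → (∀ i, δ (p.coeff i) = 0) →
      ∃ x : K, δ x = 0 ∧ p.IsRoot x)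
    (hPV : ∀ (n : ℕ) (A : Matrix (Fin n) (Fin n) K),
      ∃ Z Zinv : Matrix (Fin n) (Fin n) K, Z.map δ = A * Z ∧ Z * Zinv = 1 ∧ Zinv * Z = 1) :
    ∀ p : Polynomial K, 0 < p.degree → ∃ x : K, p.IsRoot x := by
  let _ : Differential K := ⟨Derivation.ofLeibniz δ hadd hmul⟩
  intro p hp
  obtain ⟨q, hq_monic, hq_irr, hqp⟩ :=
    exists_monic_irreducible_factor p (not_isUnit_of_degree_pos p hp)
  have := Fact.mk hq_irr
  have := Fact.mk hq_monic
  have := hq_monic.finite_adjoinRoot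
  have : ContainConstants K (AdjoinRoot q) := containConstants_of_forall_root
    fun p hp hc => (hCalgclosed p hp hc).imp fun _ => And.right
  obtain ⟨a, ha⟩ := Algebra.mem_bot.mp <| mem_bot_of_forall_fundamentalMatrix
    (fun n A => (hPV n A).imp fun _ ⟨Zinv, hZ, hZZinv, _⟩ => ⟨Zinv, hZ, hZZinv⟩)
    (AdjoinRoot.root q)
  refine ⟨a, IsRoot.dvd (p := q) ?_ hqp⟩
  apply (algebraMap K (AdjoinRoot q)).injective
  rw [← coe_aeval_eq_eval, ← aeval_algebraMap_apply, ha, AdjoinRoot.aeval_eq,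
    AdjoinRoot.mk_self, map_zero]
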